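/- Let f : [0,1] → ℝ be continuous with sup-norm M = sup|f|, and suppose |f(x) - f(y)|² ≤ E·|x-y| for all x,y and some E > 0. Then M² ≤ 2(‖f‖²_{L²[0,1]} + E). -/
import Mathlib


open Set

/-- Sup-norm bound from a resistance estimate: if `f` is continuous on `[0,1]`
with `M = sup |f|` and `(f x - f y)² ≤ E |x - y|`, then
`M² ≤ 2(‖f‖²_{L²[0,1]} + E)`. -/
theorem supnorm_bound_from_resistance (f : ℝ → ℝ) (E M : ℝ)
    (hf : ContinuousOn f (Icc 0 1)) (hE : 0 ≤ E)
    (hres : ∀ x ∈ Icc (0:ℝ) 1, ∀ y ∈ Icc (0:ℝ) 1,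
      (f x - f y) ^ 2 ≤ E * |x - y|)
    (hM : M = sSup ((fun x => |f x|) '' Icc 0 1)) :
    M ^ 2 ≤ 2 * ((∫ x in (0:ℝ)..1, f x ^ 2) + E) := by
  have hne : (Icc (0:ℝ) 1).Nonempty := ⟨0, by norm_num⟩
  have hcomp : IsCompact (Icc (0:ℝ) 1) := isCompact_Icc
  have habs : ContinuousOn (fun x => |f x|) (Icc 0 1) := hf.abs
  obtain ⟨x₀, hx₀, hmax⟩ := hcomp.exists_isMaxOn hne habs
  have hMx : M = |f x₀| := by
    rw [hM]
    apply le_antisymm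
    · exact csSup_le (hne.image _) (by rintro _ ⟨y, hy, rfl⟩; exact hmax hy)
    · exact le_csSup ((hcomp.image_of_continuousOn habs).bddAbove) ⟨x₀, hx₀, rfl⟩
  -- pointwise bound: M^2 ≤ 2 f x ^ 2 + 2 E for x ∈ [0,1]
  have key : ∀ x ∈ Icc (0:ℝ) 1, M ^ 2 - 2 * E ≤ 2 * f x ^ 2 := by
    intro x hx
    have h1 : (f x₀ - f x) ^ 2 ≤ E * |x₀ - x| := hres x₀ hx₀ x hx
    have h2 : |x₀ - x| ≤ 1 := by
      rw [abs_le]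
      constructor <;> [linarith [hx₀.1, hx₀.2, hx.1, hx.2]; linarith [hx₀.1, hx₀.2, hx.1, hx.2]]
    have h3 : (f x₀ - f x) ^ 2 ≤ E := by
      calc (f x₀ - f x) ^ 2 ≤ E * |x₀ - x| := h1
        _ ≤ E * 1 := by exact mul_le_mul_of_nonneg_left h2 hE
        _ = E := mul_one E
    have hM2 : M ^ 2 = f x₀ ^ 2 := by rw [hMx, sq_abs]
    nlinarith [sq_nonneg (f x₀ - 2 * f x)]
  have hig : IntervalIntegrable (fun x => 2 * f x ^ 2) MeasureTheory.volume 0 1 := by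
    apply ContinuousOn.intervalIntegrable
    rw [uIcc_of_le (by norm_num : (0:ℝ) ≤ 1)]
    exact (continuousOn_const.mul ((hf.pow 2)))
  have hmono : (∫ x in (0:ℝ)..1, (M ^ 2 - 2 * E)) ≤ ∫ x in (0:ℝ)..1, 2 * f x ^ 2 := by
    apply intervalIntegral.integral_mono_on (by norm_num) intervalIntegrable_const hig
    exact key
  rw [intervalIntegral.integral_const] at hmono
  rw [intervalIntegral.integral_const_mul] at hmono
  simp at hmono
  linarith
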